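/- arXiv:2302.07083 — 6 statements merged into one kernel-verified Lean document; each statement's English description precedes it below -/
import Mathlib

section
/- Let E be a differential field extension of a differential field k of characteristic zero, and let L be an intermediate differential field (k ⊆ L ⊆ E, with L closed under the derivation of E). Suppose y, t ∈ E are each transcendental over L and L(t) = L(y) as subfields of E. Then there exist a0, a1, a2 ∈ L with t' = a2·t² + a1·t + a0 if and only if there exist b0, b1, b2 ∈ L with y' = b2·y² + b1·y + b0. -/
open Polynomial Finset

lemma range_algebraMap_subfield {E : Type*} [Field E] (L : Subfield E) :
    Set.range (algebraMap L E) = (L : Set E) := by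
  ext x
  constructor
  · rintro ⟨⟨y, hy⟩, rfl⟩; exact hy
  · rintro hx; exact ⟨⟨x, hx⟩, rfl⟩

lemma mem_closure_pair {E : Type*} [Field E] (L : Subfield E) (t x : E) :
    x ∈ Subfield.closure ((L : Set E) ∪ {t}) ↔
      ∃ r s : Polynomial L, x = aeval t r / aeval t s := by
  rw [← IntermediateField.mem_adjoin_simple_iff]
  have : x ∈ IntermediateField.adjoin L {t} ↔
      x ∈ Subfield.closure (Set.range (algebraMap L E) ∪ {t}) := Iff.rfl
  rw [this, range_algebraMap_subfield]
open Finset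

private lemma key_deg {K E : Type*} [Field K] [Field E] [Algebra K E] {t y : E}
    (ht : Transcendental K t) (hy : Transcendental K y)
    {f g : K[X]} (hcop : IsCoprime f g) (hgt : aeval t g ≠ 0)
    (hfg : y * aeval t g = aeval t f) :
    ∀ F G : K[X], aeval y G ≠ 0 → t * aeval y G = aeval y F →
      f.natDegree ≤ 1 ∧ g.natDegree ≤ 1 := by
  have t0 : t ≠ 0 := fun h => ht (h ▸ isAlgebraic_zero)
  have y0 : y ≠ 0 := fun h => hy (h ▸ isAlgebraic_zero)
  have hinj : Function.Injective (aeval t : K[X] →ₐ[K] E) :=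
    (transcendental_iff_injective).mp ht
  suffices H : ∀ n (F G : K[X]), G.natDegree = n → aeval y G ≠ 0 →
      t * aeval y G = aeval y F → f.natDegree ≤ 1 ∧ g.natDegree ≤ 1 by
    intro F G hG hFG; exact H G.natDegree F G rfl hG hFG
  intro n
  induction n using Nat.strong_induction_on with
  | _ n IH =>
  intro F G hn hG hFG
  have hGne : G ≠ 0 := fun h => hG (by simp [h])
  have hFy : aeval y F ≠ 0 := by rw [← hFG]; exact mul_ne_zero t0 hG
  have hFne : F ≠ 0 := fun h => hFy (by simp [h])
  by_cases h0 : F.coeff 0 = 0 ∧ G.coeff 0 = 0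
  · -- both divisible by X: cancel a factor of y and recurse
    obtain ⟨F₁, hF₁⟩ : X ∣ F := X_dvd_iff.mpr h0.1
    obtain ⟨G₁, hG₁⟩ : X ∣ G := X_dvd_iff.mpr h0.2
    have hG₁ne : G₁ ≠ 0 := by rintro rfl; simp at hG₁; exact hGne hG₁
    have hGy : aeval y G = y * aeval y G₁ := by rw [hG₁, map_mul, aeval_X]
    have hG1y : aeval y G₁ ≠ 0 := by
      intro h; rw [hGy, h, mul_zero] at hG; exact hG rfl
    have hFG1 : t * aeval y G₁ = aeval y F₁ := by
      have : y * (t * aeval y G₁) = y * aeval y F₁ := by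
        rw [← mul_assoc, mul_comm y t, mul_assoc, ← hGy, hFG, hF₁, map_mul, aeval_X]
      exact mul_left_cancel₀ y0 this
    have hdlt : G₁.natDegree < n := by
      have : G.natDegree = G₁.natDegree + 1 := by
        rw [hG₁, natDegree_mul X_ne_zero hG₁ne, natDegree_X]; ring
      omega
    exact IH G₁.natDegree hdlt F₁ G₁ rfl hG1y hFG1
  · -- main case
    set m := max F.natDegree G.natDegree with hm
    set A : K[X] := ∑ i ∈ range (m + 1), C (G.coeff i) * f ^ i * g ^ (m - i) with hA
    set B : K[X] := ∑ i ∈ range (m + 1), C (F.coeff i) * f ^ i * g ^ (m - i) with hB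
    have hpow : ∀ i ∈ range (m + 1), ∀ P : K[X],
        aeval t (C (P.coeff i) * f ^ i * g ^ (m - i))
          = (aeval t g) ^ m * (P.coeff i • y ^ i) := by
      intro i hi P
      have him : i ≤ m := by simpa using Nat.lt_succ_iff.mp (mem_range.mp hi)
      have hfi : (aeval t f) ^ i = y ^ i * (aeval t g) ^ i := by
        rw [← hfg, mul_pow]
      rw [map_mul, map_mul, aeval_C, map_pow, map_pow, hfi, Algebra.smul_def]
      rw [show (aeval t g) ^ m = (aeval t g) ^ i * (aeval t g) ^ (m - i) by
        rw [← pow_add, Nat.add_sub_cancel' him]]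
      ring
    have hφA : aeval t A = (aeval t g) ^ m * aeval y G := by
      rw [hA, map_sum, aeval_eq_sum_range' (n := m + 1)
        (Nat.lt_succ_of_le (le_max_right _ _)) y, Finset.mul_sum]
      exact Finset.sum_congr rfl fun i hi => hpow i hi G
    have hφB : aeval t B = (aeval t g) ^ m * aeval y F := by
      rw [hB, map_sum, aeval_eq_sum_range' (n := m + 1)
        (Nat.lt_succ_of_le (le_max_left _ _)) y, Finset.mul_sum]
      exact Finset.sum_congr rfl fun i hi => hpow i hi F
    have hAB : X * A = B := by
      apply hinj
      show aeval t (X * A) = aeval t B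
      rw [map_mul, aeval_X, hφA, hφB]
      linear_combination ((aeval t g) ^ m) * hFG
    have hXAB : X * A - B
        = ∑ i ∈ range (m + 1), (C (G.coeff i) * X - C (F.coeff i)) * f ^ i * g ^ (m - i) := by
      rw [hA, hB, Finset.mul_sum, ← Finset.sum_sub_distrib]
      exact Finset.sum_congr rfl fun i _ => by ring
    have hzero : (0 : K[X])
        = ∑ i ∈ range (m + 1), (C (G.coeff i) * X - C (F.coeff i)) * f ^ i * g ^ (m - i) := by
      rw [← hXAB, hAB, sub_self]
    -- divisibility 1 : f ∣ C (G.coeff 0) * X - C (F.coeff 0)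
    have hdvd1 : f ∣ (C (G.coeff 0) * X - C (F.coeff 0)) := by
      have hsplit := Finset.sum_range_succ'
        (fun i => (C (G.coeff i) * X - C (F.coeff i)) * f ^ i * g ^ (m - i)) m
      rw [hsplit] at hzero
      have hfS : ∑ i ∈ range m,
          (C (G.coeff (i + 1)) * X - C (F.coeff (i + 1))) * f ^ (i + 1) * g ^ (m - (i + 1))
          = f * ∑ i ∈ range m,
          (C (G.coeff (i + 1)) * X - C (F.coeff (i + 1))) * f ^ i * g ^ (m - (i + 1)) := by
        rw [Finset.mul_sum]
        exact Finset.sum_congr rfl fun i _ => by ring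
      have hcop' : IsCoprime f (g ^ m) := hcop.pow_right
      refine hcop'.dvd_of_dvd_mul_right ⟨-(∑ i ∈ range m,
          (C (G.coeff (i + 1)) * X - C (F.coeff (i + 1))) * f ^ i * g ^ (m - (i + 1))), ?_⟩
      rw [hfS] at hzero
      simp only [pow_zero, Nat.sub_zero, mul_one] at hzero
      linear_combination -hzero
    -- divisibility 2 : g ∣ C (G.coeff m) * X - C (F.coeff m)
    have hdvd2 : g ∣ (C (G.coeff m) * X - C (F.coeff m)) := by
      have hsplit := Finset.sum_range_succ
        (fun i => (C (G.coeff i) * X - C (F.coeff i)) * f ^ i * g ^ (m - i)) m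
      rw [hsplit] at hzero
      have hgS : ∑ i ∈ range m,
          (C (G.coeff i) * X - C (F.coeff i)) * f ^ i * g ^ (m - i)
          = g * ∑ i ∈ range m,
          (C (G.coeff i) * X - C (F.coeff i)) * f ^ i * g ^ (m - i - 1) := by
        rw [Finset.mul_sum]
        refine Finset.sum_congr rfl fun i hi => ?_
        have him : i < m := mem_range.mp hi
        obtain ⟨j, hj⟩ : ∃ j, m - i = j + 1 := ⟨m - i - 1, by omega⟩
        rw [show m - i - 1 = j from by omega, hj, pow_succ]; ring
      have hcop' : IsCoprime g (f ^ m) := hcop.symm.pow_right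
      refine hcop'.dvd_of_dvd_mul_right ⟨-(∑ i ∈ range m,
          (C (G.coeff i) * X - C (F.coeff i)) * f ^ i * g ^ (m - i - 1)), ?_⟩
      rw [hgS] at hzero
      simp only [Nat.sub_self, pow_zero, mul_one] at hzero
      linear_combination -hzero
    have hdeg : ∀ a b : K, ¬(b = 0 ∧ a = 0) → (C a * X - C b).natDegree ≤ 1 ∧ C a * X - C b ≠ 0 := by
      intro a b hab
      constructor
      · refine (natDegree_sub_le _ _).trans ?_
        simp only [natDegree_C, max_le_iff]
        exact ⟨(natDegree_C_mul_le _ _).trans (by simp [natDegree_X]), by omega⟩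
      · intro h
        have h1 : a = 0 := by
          have := congrArg (fun p => Polynomial.coeff p 1) h
          simpa using this
        have h2 : b = 0 := by
          have := congrArg (fun p => Polynomial.coeff p 0) h
          simpa [h1] using this
        exact hab ⟨h2, h1⟩
    have hne1 := hdeg (G.coeff 0) (F.coeff 0) h0
    have hnem : ¬(F.coeff m = 0 ∧ G.coeff m = 0) := by
      rintro ⟨hFm, hGm⟩
      rcases max_cases F.natDegree G.natDegree with ⟨he, _⟩ | ⟨he, _⟩
      · exact hFne (leadingCoeff_eq_zero.mp
          (show F.coeff F.natDegree = 0 from by rw [← he]; exact hFm))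
      · exact hGne (leadingCoeff_eq_zero.mp
          (show G.coeff G.natDegree = 0 from by rw [← he]; exact hGm))
    have hne2 := hdeg (G.coeff m) (F.coeff m) hnem
    exact ⟨(natDegree_le_of_dvd hdvd1 hne1.2).trans hne1.1,
      (natDegree_le_of_dvd hdvd2 hne2.2).trans hne2.1⟩

lemma reduce_coprime {K E : Type*} [Field K] [Field E] [Algebra K E] {t z : E}
    (r s : K[X]) (hs : aeval t s ≠ 0) (hz : z = aeval t r / aeval t s) :
    ∃ f g : K[X], IsCoprime f g ∧ aeval t g ≠ 0 ∧ z * aeval t g = aeval t f := by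
  classical
  have hs0 : s ≠ 0 := fun h => hs (by simp [h])
  set d := EuclideanDomain.gcd r s with hd
  have hdne : d ≠ 0 := fun h => hs0 (EuclideanDomain.gcd_eq_zero_iff.mp h).2
  set f := r / d with hf
  set g := s / d with hg
  have hr : d * f = r := EuclideanDomain.mul_div_cancel' hdne (EuclideanDomain.gcd_dvd_left r s)
  have hsg : d * g = s := EuclideanDomain.mul_div_cancel' hdne (EuclideanDomain.gcd_dvd_right r s)
  have hcop : IsCoprime f g := by
    have hbez : d = r * EuclideanDomain.gcdA r s + s * EuclideanDomain.gcdB r s :=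
      EuclideanDomain.gcd_eq_gcd_ab r s
    refine ⟨EuclideanDomain.gcdA r s, EuclideanDomain.gcdB r s, ?_⟩
    apply mul_left_cancel₀ hdne
    rw [mul_one]
    calc d * (EuclideanDomain.gcdA r s * f + EuclideanDomain.gcdB r s * g)
        = (d * f) * EuclideanDomain.gcdA r s + (d * g) * EuclideanDomain.gcdB r s := by ring
      _ = d := by rw [hr, hsg, ← hbez]
  have hsd : aeval t s = aeval t d * aeval t g := by rw [← hsg, map_mul]
  have hgt : aeval t g ≠ 0 := fun h => hs (by rw [hsd, h, mul_zero])
  have hdt : aeval t d ≠ 0 := fun h => hs (by rw [hsd, h, zero_mul])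
  refine ⟨f, g, hcop, hgt, ?_⟩
  have hrd : aeval t r = aeval t d * aeval t f := by rw [← hr, map_mul]
  rw [hz, hrd, hsd]
  field_simp

lemma trans_not_mem {E : Type*} [Field E] {L : Subfield E} {x : E}
    (h : Transcendental L x) : x ∉ L :=
  fun hx => h (isAlgebraic_algebraMap (⟨x, hx⟩ : L))

lemma mobius {E : Type*} [Field E] (L : Subfield E) {t y : E}
    (ht : Transcendental L t) (hy : Transcendental L y)
    (hr : ∃ r s : Polynomial L, y = aeval t r / aeval t s)
    (hR : ∃ r s : Polynomial L, t = aeval y r / aeval y s) :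
    ∃ a b c d : L, (c : E) * t + d ≠ 0 ∧ y * ((c : E) * t + d) = (a : E) * t + b ∧
      (a : E) * d - (b : E) * c ≠ 0 := by
  have t0 : t ≠ 0 := fun h => ht (h ▸ isAlgebraic_zero)
  have y0 : y ≠ 0 := fun h => hy (h ▸ isAlgebraic_zero)
  obtain ⟨r, s, hz⟩ := hr
  have hs : aeval t s ≠ 0 := fun h => y0 (by rw [hz, h, div_zero])
  obtain ⟨f, g, hcop, hgt, hfg⟩ := reduce_coprime r s hs hz
  obtain ⟨R, S, hz2⟩ := hR
  have hS : aeval y S ≠ 0 := fun h => t0 (by rw [hz2, h, div_zero])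
  have hFG : t * aeval y S = aeval y R := by rw [hz2]; field_simp
  obtain ⟨hdf, hdg⟩ := key_deg ht hy hcop hgt hfg R S hS hFG
  have hcoe : ∀ v : L, algebraMap L E v = (v : E) := fun v => rfl
  refine ⟨f.coeff 1, f.coeff 0, g.coeff 1, g.coeff 0, ?_, ?_, ?_⟩
  · have : aeval t g = (g.coeff 1 : E) * t + (g.coeff 0 : E) := by
      conv_lhs => rw [eq_X_add_C_of_natDegree_le_one hdg]
      simp [Algebra.smul_def, hcoe]
    rwa [this] at hgt
  · have hgeq : aeval t g = (g.coeff 1 : E) * t + (g.coeff 0 : E) := by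
      conv_lhs => rw [eq_X_add_C_of_natDegree_le_one hdg]
      simp [Algebra.smul_def, hcoe]
    have hfeq : aeval t f = (f.coeff 1 : E) * t + (f.coeff 0 : E) := by
      conv_lhs => rw [eq_X_add_C_of_natDegree_le_one hdf]
      simp [Algebra.smul_def, hcoe]
    rw [← hgeq, ← hfeq]; exact hfg
  · -- determinant nonzero
    set a : E := (f.coeff 1 : E)
    set b : E := (f.coeff 0 : E)
    set c : E := (g.coeff 1 : E)
    set d : E := (g.coeff 0 : E)
    have hgeq : aeval t g = c * t + d := by
      conv_lhs => rw [eq_X_add_C_of_natDegree_le_one hdg]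
      simp [Algebra.smul_def, hcoe]
      rfl
    have hfeq : aeval t f = a * t + b := by
      conv_lhs => rw [eq_X_add_C_of_natDegree_le_one hdf]
      simp [Algebra.smul_def, hcoe]
      rfl
    have hw : c * t + d ≠ 0 := by rwa [hgeq] at hgt
    have hyw : y * (c * t + d) = a * t + b := by rw [← hgeq, ← hfeq]; exact hfg
    intro hD
    apply trans_not_mem hy
    by_cases hc : c = 0
    · have hd0 : d ≠ 0 := by rwa [hc, zero_mul, zero_add] at hw
      have ha0 : a = 0 := by
        have : a * d = 0 := by rw [← hD]; ring_nf; rw [hc]; ring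
        rcases mul_eq_zero.mp this with h | h
        · exact h
        · exact absurd h hd0
      have hyv : y = b / d := by
        rw [eq_div_iff hd0]
        have := hyw
        rw [hc, ha0] at this
        linear_combination this
      rw [hyv]
      exact L.div_mem (f.coeff 0).2 (g.coeff 0).2
    · have hyv : y = a / c := by
        rw [eq_div_iff hc]
        have h1 : (y * (c * t + d)) * c = (a * t + b) * c := by rw [hyw]
        have h2 : c * (a * t + b) = a * (c * t + d) := by linear_combination -hD
        have h3 : (y * c) * (c * t + d) = a * (c * t + d) := by
          linear_combination h1 + h2
        exact mul_right_cancel₀ hw h3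
      rw [hyv]
      exact L.div_mem (f.coeff 1).2 (g.coeff 1).2

lemma riccati_transfer {E : Type*} [Field E] (D : E → E)
    (hDadd : ∀ u v : E, D (u + v) = D u + D v)
    (hDmul : ∀ u v : E, D (u * v) = u * D v + D u * v)
    (L : Subfield E) (hLD : ∀ x ∈ L, D x ∈ L)
    {t y : E} (a b c d : L)
    (hw : (c : E) * t + d ≠ 0) (hyw : y * ((c : E) * t + d) = (a : E) * t + b)
    (hdet : (a : E) * d - (b : E) * c ≠ 0)
    (hR : ∃ a0 a1 a2 : E, a0 ∈ L ∧ a1 ∈ L ∧ a2 ∈ L ∧ D t = a2 * t ^ 2 + a1 * t + a0) :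
    ∃ b0 b1 b2 : E, b0 ∈ L ∧ b1 ∈ L ∧ b2 ∈ L ∧ D y = b2 * y ^ 2 + b1 * y + b0 := by
  obtain ⟨a0, a1, a2, h0, h1, h2, hDt⟩ := hR
  set α0 : L := ⟨a0, h0⟩
  set α1 : L := ⟨a1, h1⟩
  set α2 : L := ⟨a2, h2⟩
  set a' : L := ⟨D a, hLD _ a.2⟩ with ha'
  set b' : L := ⟨D b, hLD _ b.2⟩ with hb'
  set c' : L := ⟨D c, hLD _ c.2⟩ with hc'
  set d' : L := ⟨D d, hLD _ d.2⟩ with hd'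
  set Δ : L := a * d - b * c with hΔ
  have hΔE : (Δ : E) = (a : E) * d - (b : E) * c := by push_cast [hΔ]; ring
  have hΔ0 : Δ ≠ 0 := by
    intro h; apply hdet; rw [← hΔE, h]; simp
  have hΔE0 : (Δ : E) ≠ 0 := by rwa [hΔE]
  -- auxiliary identities
  have hacy : ((a : E) - (c : E) * y) * ((c : E) * t + d) = (Δ : E) := by
    rw [hΔE]; linear_combination (-(c : E)) * hyw
  have hty' : ((a : E) - (c : E) * y) * t = (d : E) * y - b := by
    apply mul_right_cancel₀ hw
    linear_combination (-((c : E) * t + d)) * hyw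
  -- Leibniz
  have hw' : D ((c : E) * t + (d : E)) = (c : E) * D t + D (c : E) * t + D (d : E) := by
    rw [hDadd, hDmul]
  have hu' : D ((a : E) * t + (b : E)) = (a : E) * D t + D (a : E) * t + D (b : E) := by
    rw [hDadd, hDmul]
  have hleib : y * D ((c : E) * t + (d : E)) + D y * ((c : E) * t + d)
      = D ((a : E) * t + (b : E)) := by rw [← hDmul, hyw]
  rw [hw', hu', hDt] at hleib
  -- the key polynomial identity
  have key : (Δ : E) * D y
      = a2 * ((d : E) * y - b) ^ 2
        + a1 * (((a : E) - (c : E) * y) * ((d : E) * y - b))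
        + a0 * ((a : E) - (c : E) * y) ^ 2
        + (D (a : E) - D (c : E) * y) * ((d : E) * y - b)
        + (D (b : E) - D (d : E) * y) * ((a : E) - (c : E) * y) := by
    linear_combination ((a : E) - (c : E) * y) * hleib - D y * hacy
      + (a2 * (((a : E) - (c : E) * y) * t + ((d : E) * y - b))
          + a1 * ((a : E) - (c : E) * y) + (D (a : E) - D (c : E) * y)) * hty'
  refine ⟨(Δ⁻¹ * (α2 * b ^ 2 - α1 * a * b + α0 * a ^ 2 - a' * b + b' * a) : L),
    (Δ⁻¹ * (-(α2 * b * d + α2 * b * d) + α1 * (a * d + b * c) - (α0 * a * c + α0 * a * c)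
      + a' * d + c' * b - b' * c - d' * a) : L),
    (Δ⁻¹ * (α2 * d ^ 2 - α1 * c * d + α0 * c ^ 2 - c' * d + d' * c) : L),
    SetLike.coe_mem _, SetLike.coe_mem _, SetLike.coe_mem _, ?_⟩
  push_cast
  rw [inv_mul_eq_div, inv_mul_eq_div, inv_mul_eq_div, div_mul_eq_mul_div, div_mul_eq_mul_div,
    ← add_div, ← add_div, eq_div_iff hΔE0]
  linear_combination key

/-- Let `E` be a differential field extension of a differential field `k`
(characteristic zero), with derivation `D`, and let `L` be an intermediate differential field
(`k ⊆ L ⊆ E`, `L` closed under `D`).  Suppose `y, t ∈ E` are each transcendental over `L` and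
`L(t) = L(y)` as subfields of `E`.  Then `t` satisfies a Riccati equation over `L` iff `y` does. -/
theorem stmt_0 {E : Type*} [Field E] [CharZero E]
    (D : E → E)
    (hDadd : ∀ a b : E, D (a + b) = D a + D b)
    (hDmul : ∀ a b : E, D (a * b) = a * D b + D a * b)
    (k L : Subfield E)
    (hkL : k ≤ L)
    (hkD : ∀ x ∈ k, D x ∈ k)
    (hLD : ∀ x ∈ L, D x ∈ L)
    (y t : E)
    (hty : Transcendental L t)
    (hyy : Transcendental L y)
    (hEq : Subfield.closure ((L : Set E) ∪ {t}) = Subfield.closure ((L : Set E) ∪ {y})) :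
    (∃ a0 a1 a2 : E, a0 ∈ L ∧ a1 ∈ L ∧ a2 ∈ L ∧ D t = a2 * t ^ 2 + a1 * t + a0) ↔
      (∃ b0 b1 b2 : E, b0 ∈ L ∧ b1 ∈ L ∧ b2 ∈ L ∧ D y = b2 * y ^ 2 + b1 * y + b0) := by
  have hDmul' : ∀ u v : E, D (u * v) = u * D v + D u * v := hDmul
  have main : ∀ u v : E, Transcendental L u → Transcendental L v →
      Subfield.closure ((L : Set E) ∪ {u}) = Subfield.closure ((L : Set E) ∪ {v}) →
      (∃ a0 a1 a2 : E, a0 ∈ L ∧ a1 ∈ L ∧ a2 ∈ L ∧ D u = a2 * u ^ 2 + a1 * u + a0) →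
      (∃ b0 b1 b2 : E, b0 ∈ L ∧ b1 ∈ L ∧ b2 ∈ L ∧ D v = b2 * v ^ 2 + b1 * v + b0) := by
    intro u v hu hv hE hR
    have hvmem : v ∈ Subfield.closure ((L : Set E) ∪ {u}) := by
      rw [hE]; exact Subfield.subset_closure (Or.inr rfl)
    have humem : u ∈ Subfield.closure ((L : Set E) ∪ {v}) := by
      rw [← hE]; exact Subfield.subset_closure (Or.inr rfl)
    obtain ⟨a, b, c, d, hw, hyw, hdet⟩ := mobius L hu hv
      ((mem_closure_pair L u v).mp hvmem) ((mem_closure_pair L v u).mp humem)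
    exact riccati_transfer D hDadd hDmul' L hLD a b c d hw hyw hdet hR
  exact ⟨main t y hty hyy hEq, main y t hyy hty hEq.symm⟩
end

section
/- Let k ⊆ E be differential subfields of a differential field M of characteristic zero, and let t ∈ M be transcendental over E. Suppose the subfield k(t) of M is closed under the derivation of M, and suppose t' = g(t) for some polynomial g ∈ E[X] of degree at most 2. Then every coefficient of g lies in k. -/
open Polynomial

lemma aux_div {k E : Type*} [Field k] [Field E] (ι : k →+* E) (g : E[X]) (r s : k[X])
    (hs : s.map ι ≠ 0) (h : g * s.map ι = r.map ι) : ∃ d : k[X], g = d.map ι := by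
  have hsne : s ≠ 0 := fun h0 => hs (by simp [h0])
  set u := s.leadingCoeff with hu
  have hune : u ≠ 0 := leadingCoeff_ne_zero.mpr hsne
  have hEu : ι u ≠ 0 := fun h0 => hune (ι.injective (by simp [h0]))
  set s' : k[X] := s * C u⁻¹ with hs'
  have hmon : s'.Monic := monic_mul_leadingCoeff_inv hsne
  have hss' : s = s' * C u := by
    rw [hs', mul_assoc, ← C_mul, inv_mul_cancel₀ hune, C_1, mul_one]
  have hdiv : r %ₘ s' + s' * (r /ₘ s') = r := modByMonic_add_div r s'
  have hkey : s'.map ι * (g * C (ι u) - (r /ₘ s').map ι) = (r %ₘ s').map ι := by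
    have h2 : g * (s.map ι) = (r %ₘ s').map ι + s'.map ι * (r /ₘ s').map ι := by
      rw [← Polynomial.map_mul, ← Polynomial.map_add, hdiv, h]
    rw [hss'] at h2
    simp only [Polynomial.map_mul, map_C] at h2
    linear_combination h2
  have hzero : g * C (ι u) = (r /ₘ s').map ι := by
    by_contra hne
    have hne' : g * C (ι u) - (r /ₘ s').map ι ≠ 0 := sub_ne_zero.mpr hne
    have hd1 : (s'.map ι).degree ≤ ((r %ₘ s').map ι).degree := by
      rw [← hkey, degree_mul]
      exact le_add_of_nonneg_right (zero_le_degree_iff.mpr hne')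
    have hd2 : ((r %ₘ s').map ι).degree < (s'.map ι).degree := by
      calc ((r %ₘ s').map ι).degree ≤ (r %ₘ s').degree := degree_map_le
        _ < s'.degree := degree_modByMonic_lt r hmon
        _ = (s'.map ι).degree := (hmon.degree_map ι).symm
    exact absurd (lt_of_le_of_lt hd1 hd2) (lt_irrefl _)
  refine ⟨(r /ₘ s') * C u⁻¹, ?_⟩
  rw [Polynomial.map_mul, map_C, map_inv₀, ← hzero, mul_assoc, ← C_mul,
    mul_inv_cancel₀ hEu, C_1, mul_one]

/-- Let `k ⊆ E` be differential subfields of a differential field `M`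
(characteristic zero) and let `t ∈ M` be transcendental over `E`.  Suppose the subfield `k(t)`
of `M` is closed under the derivation, and `t' = g(t)` for a polynomial `g` over `E` of degree
at most `2`.  Then every coefficient of `g` lies in `k`. -/
theorem stmt_1 {M : Type*} [Field M] [CharZero M]
    (D : M → M)
    (hDadd : ∀ a b : M, D (a + b) = D a + D b)
    (hDmul : ∀ a b : M, D (a * b) = a * D b + D a * b)
    (k E : Subfield M)
    (hkE : k ≤ E)
    (hkD : ∀ x ∈ k, D x ∈ k)
    (hED : ∀ x ∈ E, D x ∈ E)
    (t : M)
    (ht : Transcendental E t)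
    (hclosed : ∀ x ∈ Subfield.closure ((k : Set M) ∪ {t}),
      D x ∈ Subfield.closure ((k : Set M) ∪ {t}))
    (g : Polynomial E)
    (hdeg : g.degree ≤ 2)
    (hg : D t = Polynomial.aeval t g) :
    ∀ n : ℕ, (g.coeff n : M) ∈ k := by
  have trE : ∀ p : (↥E)[X], Polynomial.aeval t p = 0 → p = 0 := transcendental_iff.mp ht
  set ι : ↥k →+* ↥E := (Subfield.inclusion hkE : ↥k →+* ↥E) with hι
  have hcomp : (algebraMap ↥E M).comp ι = algebraMap ↥k M := by
    ext x; rfl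
  have hmapeval : ∀ q : (↥k)[X], Polynomial.aeval t (q.map ι) = Polynomial.aeval t q := by
    intro q
    rw [aeval_def, aeval_def, eval₂_map, hcomp]
  -- D t lies in k⟮t⟯
  have hset : Set.range (algebraMap (↥k) M) = (k : Set M) := by
    ext x
    constructor
    · rintro ⟨y, rfl⟩; exact y.2
    · intro hx; exact ⟨⟨x, hx⟩, rfl⟩
  have hmem : D t ∈ IntermediateField.adjoin (↥k) ({t} : Set M) := by
    show D t ∈ (IntermediateField.adjoin (↥k) ({t} : Set M)).toSubfield
    rw [IntermediateField.adjoin_toSubfield, hset]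
    exact hclosed t (Subfield.subset_closure (Or.inr rfl))
  obtain ⟨r, s, hrs⟩ := (IntermediateField.mem_adjoin_simple_iff (↥k) (D t)).mp hmem
  rw [hg] at hrs
  by_cases hs : Polynomial.aeval t s = 0
  · -- then g(t) = r(t)/0 = 0, so g = 0
    have hg0 : g = 0 := trE g (by rw [hrs, hs, div_zero])
    intro n
    simp only [hg0, coeff_zero, ZeroMemClass.coe_zero]
    exact zero_mem k
  · -- main case
    have hsmap : s.map ι ≠ 0 := by
      intro h0
      apply hs
      rw [← hmapeval s, h0, map_zero]
    have hmul : g * s.map ι = r.map ι := by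
      have h1 : Polynomial.aeval t (g * s.map ι - r.map ι) = 0 := by
        have : Polynomial.aeval t g * Polynomial.aeval t s = Polynomial.aeval t r :=
          ((div_eq_iff hs).mp hrs.symm).symm
        simp only [map_sub, map_mul, hmapeval]
        rw [this, sub_self]
      have := trE _ h1
      linear_combination this
    obtain ⟨d, hd⟩ := aux_div ι g r s hsmap hmul
    intro n
    have : g.coeff n = ι (d.coeff n) := by rw [hd, coeff_map]
    rw [this]
    exact (d.coeff n).2
end

section
/- Let F be an algebraically closed differential field of characteristic zero, and let K be a differential field extension of F with K = F(y) for some y ∈ K transcendental over F, such that y' = a_2·y² + a_3·y³ + ⋯ + a_n·y^n for some n ≥ 3 and a_2, …, a_n ∈ F, where there is no element u ∈ F with u' = a_2 and no element u ∈ F with u' = a_3. Then every w ∈ K with w' = 0 lies in F; that is, the field of constants of K equals the field of constants of F. -/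
open Polynomial

section AbstractDer
variable {E : Type*} [Field E] (d : E → E)

section basics
variable (hd_add : ∀ u v : E, d (u + v) = d u + d v)
  (hd_mul : ∀ u v : E, d (u * v) = u * d v + d u * v)

include hd_add in
private lemma d_zero : d 0 = 0 := by
  have h := hd_add 0 0
  rw [add_zero] at h
  exact (left_eq_add.mp h)

include hd_mul in
private lemma d_one : d 1 = 0 := by
  have h := hd_mul 1 1
  rw [mul_one, one_mul, mul_one] at h
  exact (left_eq_add.mp h)

include hd_add in
private lemma d_neg : ∀ u : E, d (-u) = - d u := by
  intro u
  have h := hd_add u (-u)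
  rw [add_neg_cancel, d_zero d hd_add] at h
  exact eq_neg_of_add_eq_zero_right h.symm

include hd_add in
private lemma d_sub : ∀ u v : E, d (u - v) = d u - d v := by
  intro u v
  rw [sub_eq_add_neg, hd_add, d_neg d hd_add, sub_eq_add_neg]

include hd_add hd_mul in
private lemma d_nat : ∀ m : ℕ, d (m : E) = 0 := by
  intro m
  induction m with
  | zero => simpa using d_zero d hd_add
  | succ k ih =>
      push_cast
      rw [hd_add, ih, d_one d hd_mul, add_zero]

include hd_add hd_mul in
private lemma d_inv : ∀ u : E, u ≠ 0 → d u⁻¹ = -(d u * u⁻¹ * u⁻¹) := by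
  intro u hu
  have h := hd_mul u u⁻¹
  rw [mul_inv_cancel₀ hu, d_one d hd_mul] at h
  have h2 : u * d u⁻¹ = -(d u * u⁻¹) := by linear_combination -h
  have h3 : u⁻¹ * (u * d u⁻¹) = u⁻¹ * -(d u * u⁻¹) := by rw [h2]
  rw [inv_mul_cancel_left₀ hu] at h3
  rw [h3]; ring

end basics

variable (hd_add : ∀ u v : E, d (u + v) = d u + d v)
  (hd_mul : ∀ u v : E, d (u * v) = u * d v + d u * v)

private noncomputable def dP : E[X] → E[X] := fun p => ∑ i ∈ p.support, C (d (p.coeff i)) * X ^ i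

include hd_add in
private lemma dP_coeff : ∀ (p : E[X]) (j : ℕ), (dP d p).coeff j = d (p.coeff j) := by
  intro p j
  unfold dP
  rw [finset_sum_coeff]
  simp only [coeff_C_mul, coeff_X_pow, mul_ite, mul_one, mul_zero]
  rw [Finset.sum_ite_eq p.support j (fun i => d (p.coeff i))]
  split
  · rfl
  · next hj => rw [notMem_support_iff.mp hj, d_zero d hd_add]

include hd_add in
private lemma dP_add : ∀ p q : E[X], dP d (p + q) = dP d p + dP d q := by
  intro p q; ext j
  simp [dP_coeff d hd_add, hd_add]

include hd_add hd_mul in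
private lemma dP_C_mul : ∀ (c : E) (p : E[X]), dP d (C c * p) = C (d c) * p + C c * dP d p := by
  intro c p; ext j
  simp [dP_coeff d hd_add, hd_mul, coeff_C_mul]
  ring

include hd_add in
private lemma dP_X_mul : ∀ p : E[X], dP d (X * p) = X * dP d p := by
  intro p; ext j
  cases j with
  | zero => simp [dP_coeff d hd_add, mul_coeff_zero, d_zero d hd_add]
  | succ k => simp [dP_coeff d hd_add, coeff_X_mul]

include hd_add hd_mul in
private lemma dP_monomial : ∀ (c : E) (m : ℕ), dP d (C c * X ^ m) = C (d c) * X ^ m := by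
  intro c m; ext j
  simp only [dP_coeff d hd_add, coeff_C_mul, coeff_X_pow]
  split
  · rw [mul_one, mul_one]
  · rw [mul_zero, mul_zero, d_zero d hd_add]

variable (T : E[X])

private noncomputable def LL : E[X] → E[X] := fun r => dP d r + derivative r * T

include hd_add in
private lemma LL_add : ∀ p q : E[X], LL d T (p + q) = LL d T p + LL d T q := by
  intro p q
  unfold LL
  rw [dP_add d hd_add, derivative_add]
  ring

include hd_add hd_mul in
private lemma LL_C_mul : ∀ (c : E) (p : E[X]), LL d T (C c * p) = C (d c) * p + C c * LL d T p := by
  intro c p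
  unfold LL
  rw [dP_C_mul d hd_add hd_mul, derivative_C_mul]
  ring

include hd_add in
private lemma LL_X_mul : ∀ p : E[X], LL d T (X * p) = X * LL d T p + p * T := by
  intro p
  unfold LL
  rw [dP_X_mul d hd_add, derivative_mul, derivative_X]
  ring

include hd_add in
private lemma LL_Xpow : ∀ (k : ℕ) (p : E[X]),
    LL d T (X ^ k * p) * X = X ^ k * (LL d T p * X + C (k : E) * (p * T)) := by
  intro k
  induction k with
  | zero => intro p; simp
  | succ k ih =>
      intro p
      rw [show (X : E[X]) ^ (k+1) * p = X * (X ^ k * p) by ring, LL_X_mul d hd_add T]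
      push_cast [map_add, map_one]
      linear_combination (X : E[X]) * ih p

-- product coefficients
private lemma mulc1 (u v : E[X]) : (u * v).coeff 1 = u.coeff 0 * v.coeff 1 + u.coeff 1 * v.coeff 0 := by
  rw [coeff_mul, Finset.Nat.sum_antidiagonal_eq_sum_range_succ_mk]
  simp [Finset.sum_range_succ]

private lemma mulc2 (u v : E[X]) :
    (u * v).coeff 2 = u.coeff 0 * v.coeff 2 + u.coeff 1 * v.coeff 1 + u.coeff 2 * v.coeff 0 := by
  rw [coeff_mul, Finset.Nat.sum_antidiagonal_eq_sum_range_succ_mk]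
  simp [Finset.sum_range_succ]
  try ring

include hd_add in
private lemma LL_coeff0 (hT0 : T.coeff 0 = 0) :
    ∀ p : E[X], (LL d T p).coeff 0 = d (p.coeff 0) := by
  intro p
  unfold LL
  rw [coeff_add, dP_coeff d hd_add, mul_coeff_zero, hT0, mul_zero, add_zero]

include hd_add in
private lemma LL_coeff1 (hT0 : T.coeff 0 = 0) (hT1 : T.coeff 1 = 0) :
    ∀ p : E[X], (LL d T p).coeff 1 = d (p.coeff 1) := by
  intro p
  unfold LL
  rw [coeff_add, dP_coeff d hd_add, mulc1, hT0, hT1, mul_zero, mul_zero]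
  ring


include hd_add hd_mul in
private lemma step1 [CharZero E] (hT0 : T.coeff 0 = 0) (hT1 : T.coeff 1 = 0)
    (hA2 : ¬ ∃ u : E, d u = T.coeff 2) :
    ∀ (s t : ℕ) (p1 q1 : E[X]), p1.coeff 0 ≠ 0 → q1.coeff 0 ≠ 0 →
      LL d T (X ^ s * p1) * (X ^ t * q1) = (X ^ s * p1) * LL d T (X ^ t * q1) → s = t := by
  intro s t p1 q1 hp1 hq1 rel
  by_contra hst
  have h1 := LL_Xpow d hd_add T s p1
  have h2 := LL_Xpow d hd_add T t q1
  set A : E[X] := LL d T p1 * X + C (s : E) * (p1 * T) with hA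
  set B : E[X] := LL d T q1 * X + C (t : E) * (q1 * T) with hB
  have key : (X : E[X]) ^ (s + t) * (A * q1) = X ^ (s + t) * (p1 * B) := by
    rw [hA, hB]
    linear_combination (-(X ^ t * q1)) * h1 + (X : E[X]) * rel + (X ^ s * p1) * h2
  have E2 : A * q1 = p1 * B :=
    mul_left_cancel₀ (pow_ne_zero _ X_ne_zero) key
  have hX2 : (X : E[X]).coeff 2 = 0 := by rw [coeff_X]; norm_num
  -- coefficients of A and B
  have hpT1 : (p1 * T).coeff 1 = 0 := by rw [mulc1, hT0, hT1]; ring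
  have hqT1 : (q1 * T).coeff 1 = 0 := by rw [mulc1, hT0, hT1]; ring
  have hpT2 : (p1 * T).coeff 2 = p1.coeff 0 * T.coeff 2 := by
    rw [mulc2, hT0, hT1]; ring
  have hqT2 : (q1 * T).coeff 2 = q1.coeff 0 * T.coeff 2 := by
    rw [mulc2, hT0, hT1]; ring
  have hA0 : A.coeff 0 = 0 := by
    rw [hA, coeff_add, mul_coeff_zero, coeff_X_zero, mul_zero, mul_coeff_zero,
      mul_coeff_zero, hT0, mul_zero, mul_zero, add_zero]
  have hA1 : A.coeff 1 = d (p1.coeff 0) := by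
    rw [hA, coeff_add, mulc1, coeff_X_zero, coeff_X_one, LL_coeff0 d hd_add T hT0,
      coeff_C_mul, hpT1, mul_zero, mul_one, mul_zero, add_zero, add_zero]
  have hA2' : A.coeff 2 = d (p1.coeff 1) + (s : E) * (p1.coeff 0 * T.coeff 2) := by
    rw [hA, coeff_add, mulc2, coeff_X_zero, coeff_X_one, hX2,
      LL_coeff1 d hd_add T hT0 hT1, coeff_C_mul, hpT2]
    ring
  have hB0 : B.coeff 0 = 0 := by
    rw [hB, coeff_add, mul_coeff_zero, coeff_X_zero, mul_zero, mul_coeff_zero,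
      mul_coeff_zero, hT0, mul_zero, mul_zero, add_zero]
  have hB1 : B.coeff 1 = d (q1.coeff 0) := by
    rw [hB, coeff_add, mulc1, coeff_X_zero, coeff_X_one, LL_coeff0 d hd_add T hT0,
      coeff_C_mul, hqT1, mul_zero, mul_one, mul_zero, add_zero, add_zero]
  have hB2 : B.coeff 2 = d (q1.coeff 1) + (t : E) * (q1.coeff 0 * T.coeff 2) := by
    rw [hB, coeff_add, mulc2, coeff_X_zero, coeff_X_one, hX2,
      LL_coeff1 d hd_add T hT0 hT1, coeff_C_mul, hqT2]
    ring
  -- coefficient identities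
  have e1 : d (p1.coeff 0) * q1.coeff 0 = p1.coeff 0 * d (q1.coeff 0) := by
    have h := congrArg (fun r : E[X] => r.coeff 1) E2
    simp only [mulc1, hA0, hA1, hB0, hB1] at h
    linear_combination h
  have e2 : d (p1.coeff 0) * q1.coeff 1
      + (d (p1.coeff 1) + (s : E) * (p1.coeff 0 * T.coeff 2)) * q1.coeff 0
      = p1.coeff 0 * (d (q1.coeff 1) + (t : E) * (q1.coeff 0 * T.coeff 2))
      + p1.coeff 1 * d (q1.coeff 0) := by
    have h := congrArg (fun r : E[X] => r.coeff 2) E2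
    simp only [mulc2, hA0, hA1, hA2', hB0, hB1, hB2] at h
    linear_combination h
  -- field computation
  set α := p1.coeff 0 with hα
  set β := q1.coeff 0 with hβ
  set A1 := p1.coeff 1
  set B1 := q1.coeff 1
  set a2 := T.coeff 2
  have hβinv : d β⁻¹ = -(d β * β⁻¹ * β⁻¹) := d_inv d hd_add hd_mul β hq1
  set γ : E := α * β⁻¹ with hγdef
  have hγ0 : γ ≠ 0 := mul_ne_zero hp1 (inv_ne_zero hq1)
  have hγ : d γ = 0 := by
    rw [hγdef, hd_mul, hβinv]
    field_simp
    linear_combination e1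
  set v : E := (A1 - γ * B1) * β⁻¹ with hvdef
  have expand : d v = (A1 - γ * B1) * (-(d β * β⁻¹ * β⁻¹))
      + (d A1 - (γ * d B1 + d γ * B1)) * β⁻¹ := by
    rw [hvdef, hd_mul, hβinv, d_sub d hd_add, hd_mul]
  have goal3 : d v * β ^ 3 = ((((t : E) - (s : E)) * γ) * a2) * β ^ 3 := by
    rw [expand, hγ, hγdef]
    field_simp
    linear_combination β * e2 - B1 * e1
  have hdv : d v = (((t : E) - (s : E)) * γ) * a2 :=
    mul_right_cancel₀ (pow_ne_zero 3 hq1) goal3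
  set c : E := ((t : E) - (s : E)) * γ with hcdef
  have hts : (t : E) ≠ (s : E) := by exact_mod_cast (Ne.symm hst)
  have hc0 : c ≠ 0 := mul_ne_zero (sub_ne_zero.mpr hts) hγ0
  have hdc : d c = 0 := by
    rw [hcdef, hd_mul, hγ, d_sub d hd_add, d_nat d hd_add hd_mul, d_nat d hd_add hd_mul]
    ring
  have hcinv : d c⁻¹ = 0 := by
    rw [d_inv d hd_add hd_mul c hc0, hdc]; ring
  refine hA2 ⟨v * c⁻¹, ?_⟩
  rw [hd_mul, hcinv, mul_zero, zero_add, hdv]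
  rw [mul_comm c a2, mul_assoc, mul_inv_cancel₀ hc0, mul_one]


private lemma trail_dec {E : Type*} [Field E] :
    ∀ (N : ℕ) (p : E[X]), p.natDegree ≤ N → p ≠ 0 →
      ∃ (s : ℕ) (p1 : E[X]), p1.coeff 0 ≠ 0 ∧ p = X ^ s * p1 := by
  intro N
  induction N with
  | zero =>
      intro p hdeg hp
      by_cases h0 : p.coeff 0 = 0
      · obtain ⟨r, hr⟩ := X_dvd_iff.mpr h0
        have hr0 : r ≠ 0 := by rintro rfl; simp at hr; exact hp hr
        have : p.natDegree = 1 + r.natDegree := by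
          rw [hr, natDegree_mul X_ne_zero hr0, natDegree_X]
        omega
      · exact ⟨0, p, h0, by ring⟩
  | succ N ih =>
      intro p hdeg hp
      by_cases h0 : p.coeff 0 = 0
      · obtain ⟨r, hr⟩ := X_dvd_iff.mpr h0
        have hr0 : r ≠ 0 := by rintro rfl; simp at hr; exact hp hr
        have hd : p.natDegree = 1 + r.natDegree := by
          rw [hr, natDegree_mul X_ne_zero hr0, natDegree_X]
        obtain ⟨s, p1, h1, h2⟩ := ih r (by omega) hr0
        exact ⟨s + 1, p1, h1, by rw [hr, h2]; ring⟩
      · exact ⟨0, p, h0, by ring⟩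

include hd_add hd_mul in
private lemma mainlem [CharZero E] (hT0 : T.coeff 0 = 0) (hT1 : T.coeff 1 = 0)
    (hA2 : ¬ ∃ u : E, d u = T.coeff 2) :
    ∀ p q : E[X], q ≠ 0 → LL d T p * q = p * LL d T q → ∃ c : E, p = C c * q := by
  intro p q hq rel
  by_cases hp : p = 0
  · exact ⟨0, by rw [hp, map_zero, zero_mul]⟩
  obtain ⟨s, p1, hp1, hpdec⟩ := trail_dec p.natDegree p le_rfl hp
  obtain ⟨t, q1, hq1, hqdec⟩ := trail_dec q.natDegree q le_rfl hq
  have hst : s = t := by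
    apply step1 d hd_add hd_mul T hT0 hT1 hA2 s t p1 q1 hp1 hq1
    rw [← hpdec, ← hqdec]; exact rel
  subst hst
  -- cancel to get the relation for p1 q1
  have h1 := LL_Xpow d hd_add T s p1
  have h2 := LL_Xpow d hd_add T s q1
  have key : (X : E[X]) ^ (s + s) * ((LL d T p1 * q1) * X * X) =
      X ^ (s + s) * ((p1 * LL d T q1) * X * X) := by
    rw [hpdec, hqdec] at rel
    linear_combination (-(X ^ s * q1) * X) * h1 + ((X : E[X]) * X) * rel
      + ((X ^ s * p1) * X) * h2 + ((X:E[X])^s * C (s:E) * (X^s * (p1 * T * q1)) - (X:E[X])^s * C (s:E) * (X^s * (p1 * T * q1))) * rel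
  have relP : LL d T p1 * q1 = p1 * LL d T q1 := by
    have k2 := mul_left_cancel₀ (pow_ne_zero (s+s) (X_ne_zero (R := E))) key
    have k3 := mul_right_cancel₀ (X_ne_zero (R := E)) k2
    exact mul_right_cancel₀ (X_ne_zero (R := E)) k3
  -- constant term identity
  have e1 : d (p1.coeff 0) * q1.coeff 0 = p1.coeff 0 * d (q1.coeff 0) := by
    have h := congrArg (fun r : E[X] => r.coeff 0) relP
    simp only [mul_coeff_zero, LL_coeff0 d hd_add T hT0] at h
    linear_combination h
  set α := p1.coeff 0 with hα
  set β := q1.coeff 0 with hβ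
  set γ : E := α * β⁻¹ with hγdef
  have hγ : d γ = 0 := by
    rw [hγdef, hd_mul, d_inv d hd_add hd_mul β hq1]
    field_simp
    linear_combination e1
  -- consider h := p1 - C γ * q1
  set h : E[X] := p1 - C γ * q1 with hhdef
  have hLp1 : LL d T p1 = LL d T h + C γ * LL d T q1 := by
    have : p1 = h + C γ * q1 := by rw [hhdef]; ring
    rw [this, LL_add d hd_add, LL_C_mul d hd_add hd_mul, hγ, map_zero, zero_mul, zero_add]
  have relH : LL d T h * q1 = h * LL d T q1 := by
    rw [hhdef]
    linear_combination relP - (C γ * LL d T q1 * q1 - C γ * q1 * LL d T q1) - q1 * hLp1 + (LL d T p1 * q1 - LL d T p1 * q1)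
  have hh0 : h.coeff 0 = 0 := by
    rw [hhdef, coeff_sub, coeff_C_mul, hγdef, ← hα, ← hβ]
    field_simp
    ring
  by_cases hhz : h = 0
  · refine ⟨γ, ?_⟩
    have : p1 = C γ * q1 := by
      have := sub_eq_zero.mp (hhdef ▸ hhz)
      exact this
    rw [hpdec, hqdec, this]; ring
  · obtain ⟨u, h1', hu1, hudec⟩ := trail_dec h.natDegree h le_rfl hhz
    have hu0 : u = 0 := by
      apply step1 d hd_add hd_mul T hT0 hT1 hA2 u 0 h1' q1 hu1 hq1
      rw [← hudec, pow_zero, one_mul]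
      exact relH
    subst hu0
    rw [pow_zero, one_mul] at hudec
    rw [← hudec] at hu1
    exact absurd hh0 hu1

end AbstractDer



/-- Let `F` be an algebraically closed differential subfield of a differential
field `K` (characteristic zero) with `K = F(y)`, `y` transcendental over `F`, and
`y' = a₂y² + a₃y³ + ⋯ + aₙyⁿ` (`n ≥ 3`, `aᵢ ∈ F`), where neither `a₂` nor `a₃` has an
antiderivative in `F`.  Then every `w ∈ K` with `w' = 0` lies in `F`; i.e. the field of
constants of `K` equals that of `F`. -/
theorem stmt_6 {K : Type*} [Field K] [CharZero K]
    (D : K → K)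
    (hDadd : ∀ a b : K, D (a + b) = D a + D b)
    (hDmul : ∀ a b : K, D (a * b) = a * D b + D a * b)
    (F : Subfield K)
    (hFD : ∀ x ∈ F, D x ∈ F)
    (hFAC : IsAlgClosed F)
    (y : K)
    (hy : Transcendental F y)
    (hgen : Subfield.closure ((F : Set K) ∪ {y}) = ⊤)
    (n : ℕ) (hn : 3 ≤ n)
    (a : ℕ → K) (ha : ∀ i, a i ∈ F)
    (hyder : D y = ∑ i ∈ Finset.Icc 2 n, a i * y ^ i)
    (ha2 : ¬∃ u ∈ F, D u = a 2)
    (ha3 : ¬∃ u ∈ F, D u = a 3) :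
    ∀ w : K, D w = 0 → w ∈ F := by
  classical
  set d : F → F := fun x => ⟨D x, hFD x x.2⟩ with hd
  have hd_add : ∀ u v : F, d (u + v) = d u + d v := by
    intro u v
    apply Subtype.ext
    show D ((u : K) + v) = D u + D v
    exact hDadd u v
  have hd_mul : ∀ u v : F, d (u * v) = u * d v + d u * v := by
    intro u v
    apply Subtype.ext
    show D ((u : K) * v) = (u : K) * D v + D u * v
    exact hDmul u v
  set T : Polynomial F := ∑ i ∈ Finset.Icc 2 n, C (⟨a i, ha i⟩ : F) * X ^ i with hT
  have hT0 : T.coeff 0 = 0 := by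
    rw [hT, finset_sum_coeff]
    apply Finset.sum_eq_zero
    intro i hi
    have : (2:ℕ) ≤ i := (Finset.mem_Icc.mp hi).1
    rw [coeff_C_mul, coeff_X_pow, if_neg (by omega), mul_zero]
  have hT1 : T.coeff 1 = 0 := by
    rw [hT, finset_sum_coeff]
    apply Finset.sum_eq_zero
    intro i hi
    have : (2:ℕ) ≤ i := (Finset.mem_Icc.mp hi).1
    rw [coeff_C_mul, coeff_X_pow, if_neg (by omega), mul_zero]
  have hT2 : T.coeff 2 = (⟨a 2, ha 2⟩ : F) := by
    rw [hT, finset_sum_coeff]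
    rw [Finset.sum_eq_single 2]
    · rw [coeff_C_mul, coeff_X_pow, if_pos rfl, mul_one]
    · intro i hi hne
      rw [coeff_C_mul, coeff_X_pow, if_neg (fun h => hne h.symm), mul_zero]
    · intro h
      exact absurd (Finset.mem_Icc.mpr ⟨le_refl 2, by omega⟩) h
  have hA2 : ¬ ∃ u : F, d u = T.coeff 2 := by
    rintro ⟨u, hu⟩
    rw [hT2] at hu
    exact ha2 ⟨(u : K), u.2, congrArg Subtype.val hu⟩
  have hyT : aeval y T = D y := by
    rw [hT, hyder, map_sum]
    apply Finset.sum_congr rfl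
    intro i _
    rw [map_mul, map_pow, aeval_X, aeval_C]
    rfl
  -- y-power derivative
  have hypow : ∀ k : ℕ, D (y ^ (k + 1)) = ((k : K) + 1) * y ^ k * D y := by
    intro k
    induction k with
    | zero => simp
    | succ m ih =>
        rw [pow_succ, mul_comm (y ^ (m+1)) y, hDmul, ih]
        push_cast
        ring
  
  -- the derivation/aeval compatibility
  have hcoe : ∀ u : F, D (u : K) = ((d u : F) : K) := fun u => rfl
  have DAeval : ∀ r : Polynomial F, D (aeval y r) = aeval y (LL d T r) := by
    intro r
    induction r using Polynomial.induction_on with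
    | C c =>
        have hLC : LL d T (C c) = C (d c) := by
          show dP d (C c) + derivative (C c) * T = C (d c)
          rw [derivative_C, zero_mul, add_zero]
          simpa using dP_monomial d hd_add hd_mul c 0
        rw [hLC, aeval_C, aeval_C]
        exact hcoe c
    | add p q ihp ihq =>
        rw [map_add, hDadd, ihp, ihq, LL_add d hd_add, map_add]
    | monomial k c _ =>
        have hL : LL d T (C c * X ^ (k+1))
            = C (d c) * X ^ (k+1) + C c * (C ((k+1 : ℕ) : F) * X ^ (k+1-1)) * T := by
          show dP d (C c * X ^ (k+1)) + derivative (C c * X ^ (k+1)) * T = _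
          rw [dP_monomial d hd_add hd_mul, derivative_C_mul, derivative_X_pow]
        rw [hL]
        rw [map_mul, map_pow, aeval_C, aeval_X, hDmul, hypow k]
        simp only [map_add, map_mul, map_pow, aeval_C, aeval_X, hyT]
        rw [show k + 1 - 1 = k from rfl]
        have e1 : D ((algebraMap (↥F) K) c) = (algebraMap (↥F) K) (d c) := rfl
        have e2 : ((algebraMap (↥F) K) ((k+1 : ℕ) : F)) = (k : K) + 1 := by
          rw [map_natCast]; push_cast; ring
        rw [e1, e2]
        ring
  have aeval_ne : ∀ q : Polynomial F, q ≠ 0 → aeval y q ≠ 0 := by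
    intro q hq h0
    exact hy ⟨q, hq, h0⟩
  have rep : ∀ w : K, ∃ p q : Polynomial F, q ≠ 0 ∧ w * aeval y q = aeval y p := by
    intro w
    have hw : w ∈ Subfield.closure ((F : Set K) ∪ {y}) := by
      rw [hgen]; exact Subfield.mem_top w
    refine Subfield.closure_induction ?_ ?_ ?_ ?_ ?_ ?_ hw
    · rintro x (hx | hx)
      · exact ⟨C ⟨x, hx⟩, 1, one_ne_zero, by rw [map_one, mul_one, aeval_C]; rfl⟩
      · rw [Set.mem_singleton_iff] at hx; subst hx
        exact ⟨X, 1, one_ne_zero, by rw [map_one, aeval_X, mul_one]⟩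
    · exact ⟨1, 1, one_ne_zero, by rw [map_one, mul_one]⟩
    · rintro x z - - ⟨p1, q1, hq1, h1⟩ ⟨p2, q2, hq2, h2⟩
      refine ⟨p1 * q2 + p2 * q1, q1 * q2, mul_ne_zero hq1 hq2, ?_⟩
      simp only [map_add, map_mul]
      linear_combination (aeval y q2) * h1 + (aeval y q1) * h2
    · rintro x - ⟨p1, q1, hq1, h1⟩
      exact ⟨-p1, q1, hq1, by rw [map_neg]; linear_combination -h1⟩
    · rintro x - ⟨p1, q1, hq1, h1⟩
      by_cases hx : x = 0
      · subst hx; exact ⟨0, 1, one_ne_zero, by rw [map_zero, inv_zero, zero_mul]⟩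
      · have hp1 : p1 ≠ 0 := by
          rintro rfl
          rw [map_zero] at h1
          rcases mul_eq_zero.mp h1 with h | h
          · exact hx h
          · exact aeval_ne q1 hq1 h
        refine ⟨q1, p1, hp1, ?_⟩
        rw [← h1]
        exact inv_mul_cancel_left₀ hx _
    · rintro x z - - ⟨p1, q1, hq1, h1⟩ ⟨p2, q2, hq2, h2⟩
      refine ⟨p1 * p2, q1 * q2, mul_ne_zero hq1 hq2, ?_⟩
      simp only [map_mul]
      linear_combination (z * aeval y q2) * h1 + (aeval y p1) * h2
  intro w hw
  obtain ⟨p, q, hq, hrep⟩ := rep w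
  have haq : aeval y q ≠ 0 := aeval_ne q hq
  have hDp : D (aeval y p) = w * D (aeval y q) := by
    rw [← hrep, hDmul, hw, zero_mul, add_zero]
  have hrel : LL d T p * q = p * LL d T q := by
    have h0 : aeval y (LL d T p * q - p * LL d T q) = 0 := by
      rw [map_sub, map_mul, map_mul, ← DAeval p, ← DAeval q, hDp, ← hrep]
      ring
    by_contra hne
    exact aeval_ne _ (sub_ne_zero_of_ne hne) h0
  obtain ⟨c, hc⟩ := mainlem d hd_add hd_mul T hT0 hT1 hA2 p q hq hrel
  have hpc : aeval y p = (c : K) * aeval y q := by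
    rw [hc, map_mul, aeval_C]; rfl
  have hwc : w = (c : K) := by
    apply mul_right_cancel₀ haq
    rw [hrep, hpc]
  rw [hwc]; exact c.2
end

section
/- Let k be a differential field of characteristic zero with algebraically closed field of constants C, and let L be a differential field extension of k whose field of constants is also C. Let a, b, c ∈ k with a ≠ 0. If u1, u2, u3, u4 ∈ L are distinct, each transcendental over k, and satisfy u_i' = a·u_i² + b·u_i + c for i = 1, 2, 3, 4, then u1, u2, u3, u4 are algebraically dependent over k. -/
/-- Let `k` be a differential subfield of a differential field `L`
(characteristic zero) such that the constants of `L` coincide with the constants `C` of `k`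
and `C` is algebraically closed.  If `a, b, c ∈ k`, `a ≠ 0`, and `u₁, u₂, u₃, u₄ ∈ L` are distinct,
each transcendental over `k`, and satisfy `uᵢ' = a·uᵢ² + b·uᵢ + c`, then `u₁, u₂, u₃, u₄` are
algebraically dependent over `k`. -/
theorem stmt_11 {L : Type*} [Field L] [CharZero L]
    (D : L → L)
    (hDadd : ∀ a b : L, D (a + b) = D a + D b)
    (hDmul : ∀ a b : L, D (a * b) = a * D b + D a * b)
    (k : Subfield L)
    (hkD : ∀ x ∈ k, D x ∈ k)
    -- the field of constants of `L` is `C`, the field of constants of `k`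
    (hconst : ∀ x : L, D x = 0 → x ∈ k)
    -- `C` is algebraically closed: every nonconstant polynomial with coefficients in `C`
    -- has a root in `C`
    (hCac : ∀ p : Polynomial L, 0 < p.degree → (∀ i, D (p.coeff i) = 0) →
      ∃ x : L, D x = 0 ∧ p.IsRoot x)
    (a b c : L) (ha : a ∈ k) (hb : b ∈ k) (hc : c ∈ k) (ha0 : a ≠ 0)
    (u1 u2 u3 u4 : L)
    (hdist : u1 ≠ u2 ∧ u1 ≠ u3 ∧ u1 ≠ u4 ∧ u2 ≠ u3 ∧ u2 ≠ u4 ∧ u3 ≠ u4)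
    (htr1 : Transcendental k u1) (htr2 : Transcendental k u2)
    (htr3 : Transcendental k u3) (htr4 : Transcendental k u4)
    (h1 : D u1 = a * u1 ^ 2 + b * u1 + c) (h2 : D u2 = a * u2 ^ 2 + b * u2 + c)
    (h3 : D u3 = a * u3 ^ 2 + b * u3 + c) (h4 : D u4 = a * u4 ^ 2 + b * u4 + c) :
    ¬ AlgebraicIndependent k ![u1, u2, u3, u4] := by

  obtain ⟨h12, h13, h14, h23, h24, h34⟩ := hdist
  -- derivation facts
  have hD0 : D 0 = 0 := by have := hDadd 0 0; simpa using this
  have hDsub : ∀ x y : L, D (x - y) = D x - D y := by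
    intro x y
    have h := hDadd (x - y) y
    rw [sub_add_cancel] at h
    linear_combination -h
  set N : L := (u1 - u3) * (u2 - u4) with hN
  set M : L := (u1 - u4) * (u2 - u3) with hMdef
  have hM : M ≠ 0 := mul_ne_zero (sub_ne_zero.2 h14) (sub_ne_zero.2 h23)
  set S : L := a * (u1 + u2 + u3 + u4) + 2 * b with hS
  have hDN : D N = N * S := by
    rw [hN, hDmul, hDsub, hDsub, h1, h2, h3, h4, hS]; ring
  have hDM : D M = M * S := by
    rw [hMdef, hDmul, hDsub, hDsub, h1, h2, h3, h4, hS]; ring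
  have hrM : N / M * M = N := div_mul_cancel₀ N hM
  have hDr : D (N / M) = 0 := by
    have h := hDmul (N / M) M
    rw [hrM, hDN, hDM] at h
    have hc2 : N / M * (M * S) = N * S := by rw [← mul_assoc, hrM]
    have key : D (N / M) * M = 0 := by linear_combination -h - hc2
    exact (mul_eq_zero.1 key).resolve_right hM
  have hrk : N / M ∈ k := hconst _ hDr
  intro hAI
  have hinj := algebraicIndependent_iff_injective_aeval.mp hAI
  set r : k := ⟨N / M, hrk⟩ with hrdef
  set p : MvPolynomial (Fin 4) k :=
    (MvPolynomial.X 0 - MvPolynomial.X 2) * (MvPolynomial.X 1 - MvPolynomial.X 3) -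
      MvPolynomial.C r * ((MvPolynomial.X 0 - MvPolynomial.X 3) *
        (MvPolynomial.X 1 - MvPolynomial.X 2)) with hp
  have hev : MvPolynomial.aeval ![u1, u2, u3, u4] p = 0 := by
    have hralg : (algebraMap k L) r = N / M := rfl
    simp only [hp, map_sub, map_mul, MvPolynomial.aeval_X, MvPolynomial.aeval_C, hralg]
    simp only [Matrix.cons_val_zero, Matrix.cons_val_one, Matrix.head_cons,
      Matrix.cons_val_two, Matrix.tail_cons, Matrix.cons_val_three]
    field_simp
    rw [hN, hMdef]; ring
  have hp0 : p = 0 := hinj (by rw [hev, map_zero])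
  have heval : MvPolynomial.eval (![1, 0, 0, 1] : Fin 4 → k) p = 0 := by
    rw [hp0]; exact map_zero _
  set_option synthInstance.maxHeartbeats 1000000 in
  simp [hp] at heval
end

section
/- Let k be a differential field of characteristic zero with algebraically closed field of constants C, and let L be a differential field extension of k whose field of constants is also C. Let α ∈ k be nonzero and g2, g3 ∈ C with 27·g3² ≠ g2³. If u, v ∈ L are each transcendental over k and satisfy (u')² = α²·(4u³ − g2·u − g3) and (v')² = α²·(4v³ − g2·v − g3), then v ∈ k(u, u'); in particular, u and v are algebraically dependent over k. -/
set_option maxHeartbeats 1000000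
set_option synthInstance.maxHeartbeats 400000

open IntermediateField Polynomial

/-- If `t² ∈ k(u)` and `v` lies in the subfield generated by `k, u, t`, then `u, v` are
algebraically dependent over `k`. -/
theorem aux_dep {L : Type*} [Field L] (k : Subfield L) (u t v c : L)
    (hc : c ∈ IntermediateField.adjoin (↥k) {u}) (htc : t ^ 2 = c)
    (hvmem : v ∈ Subfield.closure ((k : Set L) ∪ {u, t}))
    (hind : AlgebraicIndependent (↥k) ![u, v]) : False := by
  set K₀ := ↥k
  set F : IntermediateField K₀ L := IntermediateField.adjoin K₀ {u} with hF
  -- `t` is integral over `F`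
  have hint : IsIntegral F t := by
    refine ⟨X ^ 2 - C (⟨c, hc⟩ : F), Polynomial.monic_X_pow_sub_C _ (by norm_num), ?_⟩
    simp only [Polynomial.eval₂_sub, Polynomial.eval₂_X_pow, Polynomial.eval₂_C]
    have : (algebraMap F L) (⟨c, hc⟩ : F) = c := rfl
    rw [this, htc, sub_self]
  have halg : Algebra.IsAlgebraic F (F⟮t⟯) := IntermediateField.isAlgebraic_adjoin_simple hint
  -- `v` lies in `F⟮t⟯`
  have hvE : v ∈ IntermediateField.adjoin K₀ ({u} ∪ {t}) := by
    have hle : Subfield.closure ((k : Set L) ∪ {u, t}) ≤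
        (IntermediateField.adjoin K₀ ({u} ∪ {t})).toSubfield := by
      apply Subfield.closure_le.2
      rintro x (hx | hx)
      · exact (IntermediateField.adjoin K₀ ({u} ∪ {t})).algebraMap_mem ⟨x, hx⟩
      · rcases hx with rfl | hx
        · exact IntermediateField.subset_adjoin _ _ (Or.inl rfl)
        · rcases hx with rfl
          exact IntermediateField.subset_adjoin _ _ (Or.inr rfl)
    exact hle hvmem
  rw [← IntermediateField.adjoin_adjoin_left K₀ {u} {t}] at hvE
  have hvalg : IsAlgebraic F v := by
    have h1 : IsAlgebraic F (⟨v, hvE⟩ : F⟮t⟯) := halg.isAlgebraic _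
    exact (isAlgebraic_algHom_iff (F⟮t⟯).val Subtype.val_injective).2 h1
  -- the ring `R₀ = k[u]`
  set R₀ : Subalgebra K₀ L := Algebra.adjoin K₀ {u} with hR₀
  have hle : R₀ ≤ F.toSubalgebra :=
    Algebra.adjoin_le (Set.singleton_subset_iff.2 (IntermediateField.subset_adjoin _ _ rfl))
  letI algRF : Algebra R₀ F := (Subalgebra.inclusion hle).toAlgebra
  haveI : IsScalarTower R₀ F L := IsScalarTower.of_algebraMap_eq' rfl
  haveI : IsFractionRing R₀ F := by
    refine (isLocalization_iff _ _).2 ⟨?_, ?_, ?_⟩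
    · rintro ⟨y, hy⟩
      have hy0 : (y : L) ≠ 0 := by
        intro h
        have hy' : y = 0 := Subtype.ext h
        rw [hy'] at hy
        exact zero_notMem_nonZeroDivisors hy
      rw [isUnit_iff_ne_zero]
      intro h
      exact hy0 (congrArg (fun z : F => (z : L)) h)
    · intro z
      obtain ⟨r, s, hz⟩ := (IntermediateField.mem_adjoin_simple_iff _ _).1 z.2
      by_cases hs : (Polynomial.aeval u) s = 0
      · refine ⟨⟨0, 1⟩, ?_⟩
        have hz0 : (z : L) = 0 := by rw [hz, hs, div_zero]
        have : z = 0 := Subtype.ext hz0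
        simp [this]
      · refine ⟨⟨⟨(Polynomial.aeval u) r, Polynomial.aeval_mem_adjoin_singleton _ _⟩,
          ⟨⟨(Polynomial.aeval u) s, Polynomial.aeval_mem_adjoin_singleton _ _⟩,
            mem_nonZeroDivisors_of_ne_zero (by
              intro h
              exact hs (congrArg Subtype.val h))⟩⟩, ?_⟩
        apply Subtype.ext
        show (z : L) * (Polynomial.aeval u) s = (Polynomial.aeval u) r
        rw [hz, div_mul_cancel₀ _ hs]
    · intro x y h
      refine ⟨1, ?_⟩
      have hxy : x = y := Subtype.ext (congrArg (fun z : F => (z : L)) h)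
      rw [hxy]
  have hvalgR : IsAlgebraic R₀ v := (IsFractionRing.isAlgebraic_iff R₀ F L).mpr hvalg
  -- transcendence of `v` over `k[u]` from algebraic independence
  have hxind : AlgebraicIndependent K₀ (fun _ : Unit => u) := by
    rw [algebraicIndependent_unique_type_iff]
    exact hind.transcendental 0
  have hop : AlgebraicIndependent K₀ (fun o : Option Unit => o.elim v (fun _ => u)) := by
    have h := hind.comp (fun o : Option Unit => o.elim 1 (fun _ => 0)) (by
      rintro (_ | _) (_ | _) h <;> simp_all)
    convert h using 1
    funext o
    rcases o with _ | _ <;> simp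
  have htrans := (hxind.option_iff_transcendental v).1 hop
  rw [Set.range_const] at htrans
  exact htrans hvalgR




/-- Let `k` be a differential subfield of a differential field `L`
(characteristic zero) such that the constants of `L` coincide with the constants `C` of `k`
and `C` is algebraically closed.  Let `α ∈ k` be nonzero and `g₂, g₃ ∈ C` with `27·g₃² ≠ g₂³`.
If `u, v ∈ L` are each transcendental over `k` and satisfy the Weierstrass differential
equations `(u')² = α²·(4u³ − g₂·u − g₃)` and `(v')² = α²·(4v³ − g₂·v − g₃)`, then
`v ∈ k(u, u')`; in particular `u` and `v` are algebraically dependent over `k`. -/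
theorem stmt_12 {L : Type*} [Field L] [CharZero L]
    (D : L → L)
    (hDadd : ∀ a b : L, D (a + b) = D a + D b)
    (hDmul : ∀ a b : L, D (a * b) = a * D b + D a * b)
    (k : Subfield L)
    (hkD : ∀ x ∈ k, D x ∈ k)
    -- the field of constants of `L` is `C`, the field of constants of `k`
    (hconst : ∀ x : L, D x = 0 → x ∈ k)
    -- `C` is algebraically closed: every nonconstant polynomial with coefficients in `C`
    -- has a root in `C`
    (hCac : ∀ p : Polynomial L, 0 < p.degree → (∀ i, D (p.coeff i) = 0) →
      ∃ x : L, D x = 0 ∧ p.IsRoot x)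
    (α : L) (hα : α ∈ k) (hα0 : α ≠ 0)
    (g2 g3 : L) (hg2 : g2 ∈ k) (hg2' : D g2 = 0) (hg3 : g3 ∈ k) (hg3' : D g3 = 0)
    (hdisc : 27 * g3 ^ 2 ≠ g2 ^ 3)
    (u v : L) (hu : Transcendental k u) (hv : Transcendental k v)
    (hueq : (D u) ^ 2 = α ^ 2 * (4 * u ^ 3 - g2 * u - g3))
    (hveq : (D v) ^ 2 = α ^ 2 * (4 * v ^ 3 - g2 * v - g3)) :
    v ∈ Subfield.closure ((k : Set L) ∪ {u, D u}) ∧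
      ¬ AlgebraicIndependent k ![u, v] := by
  -- basic facts about the derivation
  have hD0 : D 0 = 0 := by
    have h := hDadd 0 0
    rw [add_zero] at h
    exact (left_eq_add.mp h)
  have hD1 : D 1 = 0 := by
    have h := hDmul 1 1
    rw [mul_one, one_mul, mul_one] at h
    exact (left_eq_add.mp h)
  have hDneg : ∀ a : L, D (-a) = - D a := by
    intro a
    have h := hDadd a (-a)
    rw [add_neg_cancel, hD0] at h
    exact (eq_neg_of_add_eq_zero_right h.symm)
  have hDsub : ∀ a b : L, D (a - b) = D a - D b := by
    intro a b
    rw [sub_eq_add_neg, hDadd, hDneg, sub_eq_add_neg]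
  have hDsq : ∀ a : L, D (a ^ 2) = 2 * a * D a := by
    intro a
    rw [sq, hDmul]; ring
  have hDcube : ∀ a : L, D (a ^ 3) = 3 * a ^ 2 * D a := by
    intro a
    rw [pow_succ, hDmul, hDsq]; ring
  have hD2 : D 2 = 0 := by
    rw [show (2 : L) = 1 + 1 by norm_num, hDadd, hD1, add_zero]
  have hD4 : D 4 = 0 := by
    rw [show (4 : L) = 2 * 2 by norm_num, hDmul, hD2]; ring
  have hDinv : ∀ a : L, a ≠ 0 → D a⁻¹ = -(D a) / a ^ 2 := by
    intro a ha
    have h := hDmul a a⁻¹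
    rw [mul_inv_cancel₀ ha, hD1] at h
    have h2 : D a⁻¹ = (0 - D a * a⁻¹) / a := by
      rw [eq_div_iff ha]
      linear_combination -h
    rw [h2]
    field_simp
    ring
  have hDdiv : ∀ a b : L, b ≠ 0 → D (a / b) = (D a * b - a * D b) / b ^ 2 := by
    intro a b hb
    rw [div_eq_mul_inv, hDmul, hDinv b hb]
    field_simp; ring
  -- u, v are not in k, their derivatives are nonzero
  have hmem_alg : ∀ x : L, x ∈ k → IsAlgebraic k x := by
    intro x hx
    have hh : algebraMap k L ⟨x, hx⟩ = x := rfl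
    exact hh ▸ isAlgebraic_algebraMap _
  have hunk : u ∉ k := fun h => hu (hmem_alg u h)
  have hDu0 : D u ≠ 0 := fun h => hunk (hconst u h)
  have hDv0 : D v ≠ 0 := fun h => (hv (hmem_alg v (hconst v h)))
  set y : L := D u / α with hydef
  set w : L := D v / α with hwdef
  have hy0 : y ≠ 0 := div_ne_zero hDu0 hα0
  have hw0 : w ≠ 0 := div_ne_zero hDv0 hα0
  have hDu : D u = α * y := by rw [hydef]; field_simp
  have hDv : D v = α * w := by rw [hwdef]; field_simp
  have Hy : y ^ 2 = 4 * u ^ 3 - g2 * u - g3 := by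
    rw [hydef, div_pow]
    rw [div_eq_iff (pow_ne_zero 2 hα0)]
    linear_combination hueq
  have Hw : w ^ 2 = 4 * v ^ 3 - g2 * v - g3 := by
    rw [hwdef, div_pow]
    rw [div_eq_iff (pow_ne_zero 2 hα0)]
    linear_combination hveq
  -- second derivatives
  have hyd : D y = α * (12 * u ^ 2 - g2) / 2 := by
    have h := congrArg D hueq
    rw [hDsq (D u), hDmul (α ^ 2) _, hDsq α, hDsub, hDsub, hDmul 4 (u ^ 3), hD4,
      hDcube u, hDmul g2 u, hg2', hg3'] at h
    rw [hydef, hDdiv _ _ hα0]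
    rw [div_eq_iff (pow_ne_zero 2 hα0)]
    have h2a : (2 : L) * D u ≠ 0 := mul_ne_zero two_ne_zero hDu0
    apply mul_left_cancel₀ h2a
    linear_combination α * h - 2 * D α * hueq
  have hwd : D w = α * (12 * v ^ 2 - g2) / 2 := by
    have h := congrArg D hveq
    rw [hDsq (D v), hDmul (α ^ 2) _, hDsq α, hDsub, hDsub, hDmul 4 (v ^ 3), hD4,
      hDcube v, hDmul g2 v, hg2', hg3'] at h
    rw [hwdef, hDdiv _ _ hα0]
    rw [div_eq_iff (pow_ne_zero 2 hα0)]
    have h2a : (2 : L) * D v ≠ 0 := mul_ne_zero two_ne_zero hDv0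
    apply mul_left_cancel₀ h2a
    linear_combination α * h - 2 * D α * hveq
  -- notation for the closure subfield
  set S := Subfield.closure ((k : Set L) ∪ {u, D u}) with hS
  have hkS : ∀ x ∈ k, x ∈ S := fun x hx => Subfield.subset_closure (Or.inl hx)
  have huS : u ∈ S := Subfield.subset_closure (Or.inr (Set.mem_insert _ _))
  have hDuS : D u ∈ S := Subfield.subset_closure (Or.inr (Set.mem_insert_of_mem _ rfl))
  have h4S : (4 : L) ∈ S := by
    have := natCast_mem S 4
    exact_mod_cast this
  have part1 : v ∈ S := by
    by_cases huv : u = v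
    · rw [← huv]; exact huS
    · have hsub : u - v ≠ 0 := sub_ne_zero.2 huv
      set lam : L := (y + w) / (u - v) with hlam
      set x3 : L := lam ^ 2 / 4 - u - v with hx3
      set Y3 : L := y + lam * (x3 - u) with hY3
      have hDlam : D lam = ((D y + D w) * (u - v) - (y + w) * (D u - D v)) / (u - v) ^ 2 := by
        rw [hlam, hDdiv _ _ hsub, hDadd, hDsub]
      have hDx3 : D x3 = 2 * lam * D lam / 4 - D u - D v := by
        rw [hx3, hDsub, hDsub, hDdiv _ _ (by norm_num : (4 : L) ≠ 0), hDsq, hD4]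
        ring
      have hx3c : D x3 = 0 := by
        clear_value Y3 x3 lam y w
        rw [hDx3, hDlam, hyd, hwd, hDu, hDv, hlam]
        field_simp [hsub]
        linear_combination (1/2 : L) * ((-4*w*α - 4*y*α) * Hy + (4*w*α + 4*y*α) * Hw)
      have hDY3 : D Y3 = 0 := by
        clear_value Y3 x3 lam y w
        rw [hY3, hDadd, hDmul, hDsub, hx3c, hDlam, hyd, hwd, hDu, hDv, hx3, hlam]
        field_simp [hsub]
        linear_combination (-2*α*((y+w)^2 - 4*(u-v)^2*(2*u+v)) - 4*α*(u-v)^3) * Hy + (2*α*((y+w)^2 - 4*(u-v)^2*(2*u+v)) + 4*α*(u-v)^3) * Hw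
      have hx3k : x3 ∈ k := hconst _ hx3c
      have hY3k : Y3 ∈ k := hconst _ hDY3
      have hux3 : u - x3 ≠ 0 := sub_ne_zero.2 (fun h => hunk (h ▸ hx3k))
      have hmu : (y - Y3) / (u - x3) = lam := by
        rw [hY3]
        field_simp
        ring
      have hvform : v = ((y - Y3) / (u - x3)) ^ 2 / 4 - u - x3 := by
        rw [hmu, hx3]; ring
      rw [hvform]
      have hyS : y ∈ S := by rw [hydef]; exact Subfield.div_mem _ hDuS (hkS α hα)
      exact Subfield.sub_mem _ (Subfield.sub_mem _ (Subfield.div_mem _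
        (Subfield.pow_mem _ (Subfield.div_mem _ (Subfield.sub_mem _ hyS (hkS _ hY3k))
          (Subfield.sub_mem _ huS (hkS _ hx3k))) 2) h4S) huS) (hkS _ hx3k)
  refine ⟨part1, fun hind => ?_⟩
  have hadj : ∀ x ∈ k, x ∈ IntermediateField.adjoin (↥k) {u} := fun x hx =>
    (IntermediateField.adjoin (↥k) {u}).algebraMap_mem ⟨x, hx⟩
  have hu' : u ∈ IntermediateField.adjoin (↥k) {u} := IntermediateField.subset_adjoin _ _ rfl
  have h4' : (4 : L) ∈ IntermediateField.adjoin (↥k) {u} := by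
    have := IntermediateField.natCast_mem (IntermediateField.adjoin (↥k) {u}) 4
    exact_mod_cast this
  refine aux_dep k u (D u) v (α ^ 2 * (4 * u ^ 3 - g2 * u - g3)) ?_ hueq part1 hind
  exact mul_mem (pow_mem (hadj α hα) 2)
    (sub_mem (sub_mem (mul_mem h4' (pow_mem hu' 3)) (mul_mem (hadj g2 hg2) hu')) (hadj g3 hg3))
end

section
/- Let C be an algebraically closed field of characteristic zero regarded as a differential field with zero derivation, and let K be a differential field extension of C with K = C(y) for some y ∈ K transcendental over C. Suppose y' = h(y), where h = p/q is a nonzero rational function in C(Y) with p, q coprime polynomials such that p has no root in C (i.e., h has no zero in C), and h(y) denotes the image of h under the C-embedding of C(Y) into K sending Y to y. Then there exists z ∈ K \ C with z' = 1. -/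
open Polynomial

private lemma antideriv {C : Type*} [Field C] [CharZero C] (q : Polynomial C) :
    ∃ Q : Polynomial C, Polynomial.derivative Q = q := by
  induction q using Polynomial.induction_on with
  | C a => exact ⟨Polynomial.C a * Polynomial.X, by simp⟩
  | add f g hf hg =>
      obtain ⟨F, hF⟩ := hf; obtain ⟨G, hG⟩ := hg
      exact ⟨F + G, by simp [hF, hG]⟩
  | monomial n a _ =>
      refine ⟨Polynomial.C (a / (n + 2 : C)) * Polynomial.X ^ (n + 2), ?_⟩
      have hn : ((n : C) + 2) ≠ 0 := by
        exact_mod_cast (Nat.cast_add_one_ne_zero (R := C) (n + 1))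
      rw [Polynomial.derivative_C_mul, Polynomial.derivative_X_pow]
      rw [← mul_assoc, ← Polynomial.C_mul]
      push_cast
      rw [div_mul_cancel₀ _ hn]

private lemma DK_aeval {C : Type*} [Field C] (K : Type*) [Field K] [Algebra C K]
    (DK : K → K)
    (hDKadd : ∀ a b : K, DK (a + b) = DK a + DK b)
    (hDKmul : ∀ a b : K, DK (a * b) = a * DK b + DK a * b)
    (hDKC : ∀ c : C, DK (algebraMap C K c) = 0)
    (y : K) (f : Polynomial C) :
    DK (Polynomial.aeval y f) = Polynomial.aeval y (Polynomial.derivative f) * DK y := by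
  induction f using Polynomial.induction_on with
  | C a => simp [hDKC]
  | add f g hf hg => simp [hDKadd, hf, hg, add_mul]
  | monomial n a ih =>
      have : Polynomial.aeval y (Polynomial.C a * Polynomial.X ^ (n + 1)) =
          (Polynomial.aeval y (Polynomial.C a * Polynomial.X ^ n)) * y := by
        simp [pow_succ, mul_assoc]
      rw [this, hDKmul, ih]
      simp only [Polynomial.derivative_mul, Polynomial.derivative_C, Polynomial.derivative_X_pow,
        zero_mul, zero_add, map_mul, map_pow, Polynomial.aeval_C, Polynomial.aeval_X, map_natCast,
        Nat.add_sub_cancel]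
      cases n with
      | zero => simp
      | succ m =>
          push_cast
          simp only [Nat.add_sub_cancel, pow_succ]
          ring

/-- Let `C` be an algebraically closed field of characteristic zero regarded
as a differential field with zero derivation, and let `K = C(y)` be a differential field
extension with `y` transcendental over `C` and `y' = h(y)`, where `h = p/q` is a nonzero
rational function over `C` with `p, q` coprime and `p` without roots in `C` (i.e. `h` has no
zero in `C`).  Then there exists `z ∈ K \ C` with `z' = 1`. -/
theorem stmt_17 {C : Type*} [Field C] [IsAlgClosed C] [CharZero C]
    (K : Type*) [Field K] [Algebra C K]
    (DK : K → K)
    (hDKadd : ∀ a b : K, DK (a + b) = DK a + DK b)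
    (hDKmul : ∀ a b : K, DK (a * b) = a * DK b + DK a * b)
    (hDKC : ∀ c : C, DK (algebraMap C K c) = 0)
    (y : K)
    (hy : Transcendental C y)
    (hgen : IntermediateField.adjoin C {y} = (⊤ : IntermediateField C K))
    (p q : Polynomial C) (hp : p ≠ 0) (hq : q ≠ 0)
    (hcop : IsCoprime p q)
    (hnoroot : ∀ c : C, Polynomial.eval c p ≠ 0)
    (hyder : DK y = Polynomial.aeval y p / Polynomial.aeval y q) :
    ∃ z : K, z ∉ (algebraMap C K).range ∧ DK z = 1 := by
  -- p has no roots in an algebraically closed field, so p is a nonzero constant c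
  have hpdeg : p.degree = 0 := by
    by_contra hdeg
    rcases IsAlgClosed.exists_root p hdeg with ⟨x, hx⟩
    exact hnoroot x hx
  obtain ⟨c, hc0, hpc⟩ : ∃ c : C, c ≠ 0 ∧ p = Polynomial.C c := by
    refine ⟨p.coeff 0, ?_, Polynomial.eq_C_of_degree_eq_zero hpdeg⟩
    intro h0
    exact hnoroot 0 (by rw [Polynomial.eq_C_of_degree_eq_zero hpdeg, h0]; simp)
  -- antiderivative of c⁻¹ • q
  obtain ⟨Q, hQ⟩ := antideriv (Polynomial.C c⁻¹ * q)
  have hqy : Polynomial.aeval y q ≠ 0 := fun h => hq (transcendental_iff.mp hy q h)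
  refine ⟨Polynomial.aeval y Q, ?_, ?_⟩
  · rintro ⟨a, ha⟩
    have h0 : Polynomial.aeval y (Q - Polynomial.C a) = 0 := by
      rw [map_sub, Polynomial.aeval_C, ha, sub_self]
    have hQne : Q - Polynomial.C a ≠ 0 := by
      intro h
      have : Polynomial.derivative (Q - Polynomial.C a) = 0 := by rw [h]; simp
      rw [Polynomial.derivative_sub, Polynomial.derivative_C, sub_zero, hQ] at this
      exact hq (by
        have := congrArg (fun r => Polynomial.C c * r) this
        simpa [← mul_assoc, ← Polynomial.C_mul, mul_inv_cancel₀ hc0] using this)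
    exact hy ⟨Q - Polynomial.C a, hQne, h0⟩
  · rw [DK_aeval K DK hDKadd hDKmul hDKC, hQ, hyder, hpc]
    have hcy : (algebraMap C K) c ≠ 0 := by
      simpa using (map_ne_zero (algebraMap C K)).mpr hc0
    field_simp
    rw [map_mul, mul_assoc, mul_comm (Polynomial.aeval y q), ← mul_assoc, ← map_mul, ← Polynomial.C_mul,
      one_div_mul_cancel hc0, Polynomial.C_1, map_one, one_mul]
end
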